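/- Let l : ℕ → ℕ be strictly increasing and Q ⊆ 2^ω a nonempty closed set with the l-branching property. Let F be a finite tree of height h and 𝒯(Q, F) the set of l-branching skeletal trees T extending F with [T] ⊆ Q. Let n satisfy l(n) ≥ h, and let 𝒜 ⊆ 𝒯(Q, F) be invariant under l(n)-prefixes, i.e., whenever T, T' ∈ 𝒯(Q, F) satisfy T ∩ 2^{≤l(n)} = T' ∩ 2^{≤l(n)} then T ∈ 𝒜 iff T' ∈ 𝒜. If H' ⊆ 2^{l(n+1)} hits 𝒜, then the set H := {τ ∈ 2^{l(n)} : μ(([τ] \ [H']) ∩ Q) ≤ 2^{-l(n+1)}} also hits 𝒜, and μ(([H] \ [H']) ∩ Q) ≤ 2^{l(n) − l(n+1)}. -/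
import Mathlib


open scoped ENNReal

/-- The length-`n` prefix of a point of Cantor space `2^ω = ℕ → Bool`, as a binary string. -/
def pre (x : ℕ → Bool) (n : ℕ) : List Bool := (List.range n).map x

/-- `σ` is a (finite) prefix of `x ∈ 2^ω`. -/
def PrefOf (σ : List Bool) (x : ℕ → Bool) : Prop := pre x σ.length = σ

/-- The cylinder `[σ] = {x ∈ 2^ω : σ ⪯ x}`. -/
def cyl (σ : List Bool) : Set (ℕ → Bool) := {x | PrefOf σ x}

/-- `[V] = ⋃_{σ ∈ V} [σ]`. -/
def cylSet (V : Set (List Bool)) : Set (ℕ → Bool) := ⋃ σ ∈ V, cyl σ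

/-- A tree: a set of binary strings closed under prefixes. -/
def IsTree (T : Set (List Bool)) : Prop := ∀ σ ∈ T, ∀ τ : List Bool, τ <+: σ → τ ∈ T

/-- A pruned tree: every node has a proper extension in the tree. -/
def Pruned (T : Set (List Bool)) : Prop := ∀ σ ∈ T, ∃ τ ∈ T, σ <+: τ ∧ σ ≠ τ

/-- The set `[T]` of paths of a tree `T`. -/
def paths (T : Set (List Bool)) : Set (ℕ → Bool) := {x | ∀ n, pre x n ∈ T}

/-- The fair-coin (uniform) product measure on Cantor space, characterized by its
values `μ [σ] = 2^{-|σ|}` on cylinders (this determines `μ` uniquely). -/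
def IsFairCoin (μ : MeasureTheory.Measure (ℕ → Bool)) : Prop :=
  ∀ σ : List Bool, μ (cyl σ) = 2⁻¹ ^ σ.length

/-- A closed set `Q ⊆ 2^ω` has the `l`-branching property: for every `i`, every string
of length `l i` whose cylinder meets `Q` has at least two extensions of length
`l (i+1)` whose cylinders meet `Q`. -/
def LBranchingProp (l : ℕ → ℕ) (Q : Set (ℕ → Bool)) : Prop :=
  ∀ i : ℕ, ∀ σ : List Bool, σ.length = l i → (cyl σ ∩ Q).Nonempty →
    ∃ τ₁ τ₂ : List Bool, σ <+: τ₁ ∧ σ <+: τ₂ ∧ τ₁.length = l (i + 1) ∧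
      τ₂.length = l (i + 1) ∧ τ₁ ≠ τ₂ ∧ (cyl τ₁ ∩ Q).Nonempty ∧ (cyl τ₂ ∩ Q).Nonempty

/-- Two strings are incomparable: neither is a prefix of the other. -/
def Incomparable (τ₁ τ₂ : List Bool) : Prop := ¬τ₁ <+: τ₂ ∧ ¬τ₂ <+: τ₁

/-- `σ` branches in `T`: it has at least two incomparable extensions in `T`. -/
def Branches (T : Set (List Bool)) (σ : List Bool) : Prop :=
  ∃ τ₁ ∈ T, ∃ τ₂ ∈ T, σ <+: τ₁ ∧ σ <+: τ₂ ∧ Incomparable τ₁ τ₂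

/-- `T` is skeletal with main branch `z`: `z ∈ [T]` and a node of `T` branches in `T`
iff it is a prefix of `z`. -/
def SkeletalWithBranch (T : Set (List Bool)) (z : ℕ → Bool) : Prop :=
  z ∈ paths T ∧ ∀ σ ∈ T, (Branches T σ ↔ PrefOf σ z)

/-- A skeletal tree `T` with main branch `z` is `l`-branching: for every `i`, the prefix
of `z` of length `l i` has at least two incomparable extensions in `T` of length at
most `l (i+1)`. -/
def LBranchingSkel (l : ℕ → ℕ) (T : Set (List Bool)) (z : ℕ → Bool) : Prop :=
  ∀ i : ℕ, ∃ τ₁ ∈ T, ∃ τ₂ ∈ T, pre z (l i) <+: τ₁ ∧ pre z (l i) <+: τ₂ ∧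
    τ₁.length ≤ l (i + 1) ∧ τ₂.length ≤ l (i + 1) ∧ Incomparable τ₁ τ₂

/-- `F` is a finite tree of height `h`: nonempty, prefix-closed, every element has
length at most `h`, and every maximal element has length exactly `h`. -/
def FinTree (F : Finset (List Bool)) (h : ℕ) : Prop :=
  F.Nonempty ∧ (∀ σ ∈ F, ∀ τ : List Bool, τ <+: σ → τ ∈ F) ∧
    ∀ σ ∈ F, σ.length ≤ h ∧ ((∀ τ ∈ F, σ <+: τ → σ = τ) → σ.length = h)

/-- A tree `T` extends a finite tree `F` of height `h`: `F = T ∩ 2^{≤ h}`. -/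
def ExtendsFin (T : Set (List Bool)) (F : Finset (List Bool)) (h : ℕ) : Prop :=
  ∀ σ : List Bool, σ.length ≤ h → (σ ∈ T ↔ σ ∈ F)

/-- The class `𝒯(Q, F)` of `l`-branching skeletal trees extending `F` (of height `h`)
all of whose paths lie in `Q`. -/
def TQF (l : ℕ → ℕ) (Q : Set (ℕ → Bool)) (F : Finset (List Bool)) (h : ℕ)
    (T : Set (List Bool)) : Prop :=
  IsTree T ∧ Pruned T ∧ (∃ z : ℕ → Bool, SkeletalWithBranch T z ∧ LBranchingSkel l T z) ∧
    ExtendsFin T F h ∧ paths T ⊆ Q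

/-- A set of strings `H` hits a family `𝒜` of trees if `T ∩ H ≠ ∅` for every `T ∈ 𝒜`. -/
def HitsT (H : Set (List Bool)) (𝒜 : Set (Set (List Bool))) : Prop :=
  ∀ T ∈ 𝒜, (T ∩ H).Nonempty

section Lemmas
open List

@[simp] lemma pre_length (x : ℕ → Bool) (m : ℕ) : (pre x m).length = m := by
  simp [pre]

lemma pre_take (x : ℕ → Bool) (a b : ℕ) : (pre x b).take a = pre x (min a b) := by
  simp [pre, ← List.map_take, List.take_range]

lemma pre_prefix_pre (x : ℕ → Bool) {a b : ℕ} (h : a ≤ b) : pre x a <+: pre x b := by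
  rw [List.prefix_iff_eq_take, pre_take, pre_length, min_eq_left h]

lemma prefix_pre {σ : List Bool} {x : ℕ → Bool} {m : ℕ} (h : σ <+: pre x m) :
    σ = pre x σ.length := by
  have hl : σ.length ≤ m := by simpa using h.length_le
  rw [List.prefix_iff_eq_take, pre_take, min_eq_left hl] at h
  exact h

lemma pre_eq_iff {x y : ℕ → Bool} {m : ℕ} : pre x m = pre y m ↔ ∀ d < m, x d = y d := by
  simp [pre, List.map_inj_left]

lemma prefOf_iff {σ : List Bool} {x : ℕ → Bool} : PrefOf σ x ↔ σ = pre x σ.length := by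
  unfold PrefOf; exact eq_comm

lemma prefOf_pre (x : ℕ → Bool) (m : ℕ) : PrefOf (pre x m) x := by
  unfold PrefOf; rw [pre_length]

lemma mem_cyl_iff {σ : List Bool} {x : ℕ → Bool} : x ∈ cyl σ ↔ pre x σ.length = σ :=
  Iff.rfl

lemma mem_cyl_pre (x : ℕ → Bool) (m : ℕ) : x ∈ cyl (pre x m) := prefOf_pre x m

lemma incomp_of_ne {τ₁ τ₂ : List Bool} (h : τ₁.length = τ₂.length) (hne : τ₁ ≠ τ₂) :
    Incomparable τ₁ τ₂ := by
  constructor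
  · intro hp; exact hne (hp.eq_of_length h)
  · intro hp; exact hne (hp.eq_of_length h.symm).symm

lemma pre_ne_of_ne {x y : ℕ → Bool} {m : ℕ} (h : pre x m ≠ pre y m) :
    ∃ d < m, x d ≠ y d := by
  by_contra hc
  push_neg at hc
  exact h (pre_eq_iff.2 hc)

/-- A prefix of `x` of length ≤ m equals the corresponding prefix of `pre x m`. -/
lemma pre_pre_eq {x : ℕ → Bool} {σ : List Bool} (h : pre x σ.length = σ) {m : ℕ}
    (hm : σ.length ≤ m) : σ <+: pre x m := by
  rw [← h]; exact pre_prefix_pre x hm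

end Lemmas
section Lemmas2

lemma ext_to_length_aux {T : Set (List Bool)} (hT : IsTree T) (hP : Pruned T) (m : ℕ) :
    ∀ (k : ℕ) (τ : List Bool), τ ∈ T → m ≤ τ.length + k → τ.length ≤ m →
      ∃ σ ∈ T, σ.length = m ∧ τ <+: σ := by
  intro k
  induction k with
  | zero =>
    intro τ hτ h1 h2
    exact ⟨τ, hτ, le_antisymm h2 (by simpa using h1), List.prefix_refl τ⟩
  | succ k ih =>
    intro τ hτ h1 h2
    rcases eq_or_lt_of_le h2 with he | hlt
    · exact ⟨τ, hτ, he, List.prefix_refl τ⟩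
    · obtain ⟨τ', hτ', hpre, hne⟩ := hP τ hτ
      have hlen : τ.length < τ'.length := by
        rcases lt_or_eq_of_le hpre.length_le with h | h
        · exact h
        · exact absurd (hpre.eq_of_length h) hne
      -- take the prefix of τ' of length (τ.length + 1)
      set τ'' := τ'.take (τ.length + 1) with hτ''
      have hpre'' : τ'' <+: τ' := List.take_prefix _ _
      have hmem'' : τ'' ∈ T := hT τ' hτ' τ'' hpre''
      have hlen'' : τ''.length = τ.length + 1 := by
        simp [hτ'', List.length_take]
        omega
      have hτpre : τ <+: τ'' := by
        rw [List.prefix_iff_eq_take] at hpre ⊢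
        rw [hτ'', List.take_take, min_eq_left (by omega)]
        exact hpre
      obtain ⟨σ, hσ, hσl, hσp⟩ := ih τ'' hmem'' (by omega) (by omega)
      exact ⟨σ, hσ, hσl, hτpre.trans hσp⟩

lemma ext_to_length {T : Set (List Bool)} (hT : IsTree T) (hP : Pruned T) {m : ℕ}
    {τ : List Bool} (hτ : τ ∈ T) (h : τ.length ≤ m) :
    ∃ σ ∈ T, σ.length = m ∧ τ <+: σ :=
  ext_to_length_aux hT hP m m τ hτ (by omega) h

/-- A point approximable by points of a closed set lies in the set. -/
lemma mem_of_closed_approx {Q : Set (ℕ → Bool)} (hQ : IsClosed Q) {x : ℕ → Bool}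
    (h : ∀ m, ∃ q ∈ Q, pre q m = pre x m) : x ∈ Q := by
  rw [← hQ.closure_eq]
  rw [mem_closure_iff_nhds]
  intro U hU
  rw [nhds_pi, Filter.mem_pi] at hU
  obtain ⟨I, hIfin, V, hV, hVU⟩ := hU
  obtain ⟨m, hm⟩ := hIfin.bddAbove
  obtain ⟨q, hq, hpre⟩ := h (m + 1)
  have hagree : ∀ d < m + 1, q d = x d := pre_eq_iff.1 hpre
  refine ⟨q, hVU ?_, hq⟩
  intro i hi
  have : i ≤ m := hm hi
  rw [hagree i (by omega)]
  have : V i ∈ nhds (x i) := hV i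
  exact mem_of_mem_nhds this

end Lemmas2
section Chain

/-- Iterated branching chain inside `Q`, starting from a string of length `l m`. -/
lemma exists_chain {l : ℕ → ℕ} {Q : Set (ℕ → Bool)} (hQbr : LBranchingProp l Q)
    (m : ℕ) (ρ : List Bool) (hρ : ρ.length = l m) (hne : (cyl ρ ∩ Q).Nonempty) :
    ∃ c s : ℕ → List Bool, c 0 = ρ ∧
      (∀ k, (c k).length = l (m + k) ∧ (cyl (c k) ∩ Q).Nonempty) ∧
      (∀ k, c k <+: c (k + 1) ∧ c k <+: s (k + 1) ∧
        (s (k + 1)).length = l (m + k + 1) ∧ c (k + 1) ≠ s (k + 1) ∧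
        (cyl (s (k + 1)) ∩ Q).Nonempty) := by
  classical
  have step : ∀ (k : ℕ) (ρ' : List Bool), ρ'.length = l (m + k) → (cyl ρ' ∩ Q).Nonempty →
      ∃ p : List Bool × List Bool, ρ' <+: p.1 ∧ ρ' <+: p.2 ∧
        p.1.length = l (m + k + 1) ∧ p.2.length = l (m + k + 1) ∧ p.1 ≠ p.2 ∧
        (cyl p.1 ∩ Q).Nonempty ∧ (cyl p.2 ∩ Q).Nonempty := by
    intro k ρ' h1 h2
    obtain ⟨τ₁, τ₂, a1, a2, a3, a4, a5, a6, a7⟩ := hQbr (m + k) ρ' h1 h2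
    exact ⟨(τ₁, τ₂), a1, a2, a3, a4, a5, a6, a7⟩
  choose f hf using step
  let rec' : ∀ k : ℕ, {ρ' : List Bool // ρ'.length = l (m + k) ∧ (cyl ρ' ∩ Q).Nonempty} :=
    fun k => Nat.rec ⟨ρ, by simpa using hρ, hne⟩
      (fun k ih => ⟨(f k ih.1 ih.2.1 ih.2.2).1, (hf k ih.1 ih.2.1 ih.2.2).2.2.1,
        (hf k ih.1 ih.2.1 ih.2.2).2.2.2.2.2.1⟩) k
  refine ⟨fun k => (rec' k).1,
    fun k => match k with
      | 0 => ρ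
      | k + 1 => (f k (rec' k).1 (rec' k).2.1 (rec' k).2.2).2, rfl,
    fun k => (rec' k).2, fun k => ?_⟩
  have h := hf k (rec' k).1 (rec' k).2.1 (rec' k).2.2
  exact ⟨h.1, h.2.1, h.2.2.2.1, h.2.2.2.2.1, h.2.2.2.2.2.2⟩

end Chain
section Meas
open MeasureTheory

lemma cyl_subset_cylSet {V : Set (List Bool)} {ρ : List Bool} (h : ρ ∈ V) :
    cyl ρ ⊆ cylSet V := Set.subset_biUnion_of_mem h

/-- The key counting lemma: if `μ((cyl σ \ [H']) ∩ Q) > 2^{-l(n+1)}`, there are at least two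
extensions of `σ` of length `l (n+1)` avoiding `H'` whose cylinders meet `Q`. -/
lemma two_ext {μ : Measure (ℕ → Bool)} (hμ : IsFairCoin μ) {Q : Set (ℕ → Bool)}
    {H' : Set (List Bool)} {σ : List Bool} {L : ℕ} (hσL : σ.length ≤ L)
    (hgt : (2 : ℝ≥0∞)⁻¹ ^ L < μ ((cyl σ \ cylSet H') ∩ Q)) :
    ∃ ρ₁ ρ₂ : List Bool, ρ₁ ≠ ρ₂ ∧ ρ₁.length = L ∧ ρ₂.length = L ∧ σ <+: ρ₁ ∧ σ <+: ρ₂ ∧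
      ρ₁ ∉ H' ∧ ρ₂ ∉ H' ∧ (cyl ρ₁ ∩ Q).Nonempty ∧ (cyl ρ₂ ∩ Q).Nonempty := by
  classical
  set B : Set (List Bool) :=
    {ρ | ρ.length = L ∧ σ <+: ρ ∧ ρ ∉ H' ∧ (cyl ρ ∩ Q).Nonempty} with hB
  have hsub : (cyl σ \ cylSet H') ∩ Q ⊆ ⋃ ρ ∈ B, cyl ρ := by
    rintro x ⟨⟨hxσ, hxH⟩, hxQ⟩
    have hmem : pre x L ∈ B := by
      refine ⟨pre_length x L, ?_, ?_, ⟨x, mem_cyl_pre x L, hxQ⟩⟩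
      · exact pre_pre_eq hxσ hσL
      · intro hc
        exact hxH (cyl_subset_cylSet hc (mem_cyl_pre x L))
    exact Set.mem_biUnion hmem (mem_cyl_pre x L)
  by_contra hc
  push_neg at hc
  have hss : B.Subsingleton := by
    intro ρ₁ h₁ ρ₂ h₂
    by_contra hne
    have hemp := hc ρ₁ ρ₂ hne h₁.1 h₂.1 h₁.2.1 h₂.2.1 h₁.2.2.1 h₂.2.2.1 h₁.2.2.2
    exact h₂.2.2.2.ne_empty hemp
  have hle : μ ((cyl σ \ cylSet H') ∩ Q) ≤ (2 : ℝ≥0∞)⁻¹ ^ L := by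
    rcases Set.eq_empty_or_nonempty B with hE | ⟨ρ₀, hρ₀⟩
    · have : (cyl σ \ cylSet H') ∩ Q ⊆ ∅ := by simpa [hE] using hsub
      simpa [Set.subset_empty_iff.1 this] using (zero_le _)
    · have : (cyl σ \ cylSet H') ∩ Q ⊆ cyl ρ₀ := by
        refine hsub.trans ?_
        intro x hx
        simp only [Set.mem_iUnion] at hx
        obtain ⟨ρ, hρ, hxρ⟩ := hx
        rwa [hss hρ hρ₀] at hxρ
      calc μ ((cyl σ \ cylSet H') ∩ Q) ≤ μ (cyl ρ₀) := measure_mono this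
        _ = (2 : ℝ≥0∞)⁻¹ ^ L := by rw [hμ ρ₀, hρ₀.1]
  exact absurd hgt (not_lt.2 hle)

/-- At-least-one version. -/
lemma one_ext {μ : Measure (ℕ → Bool)} {Q : Set (ℕ → Bool)}
    {H' : Set (List Bool)} {σ : List Bool} {L : ℕ} (hσL : σ.length ≤ L)
    (hgt : 0 < μ ((cyl σ \ cylSet H') ∩ Q)) :
    ∃ ρ : List Bool, ρ.length = L ∧ σ <+: ρ ∧ ρ ∉ H' ∧ (cyl ρ ∩ Q).Nonempty := by
  classical
  by_contra hc
  push_neg at hc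
  have hsub : (cyl σ \ cylSet H') ∩ Q ⊆ (∅ : Set (ℕ → Bool)) := by
    rintro x ⟨⟨hxσ, hxH⟩, hxQ⟩
    have hemp := hc (pre x L) (pre_length x L) (pre_pre_eq hxσ hσL)
      (fun hmem => hxH (cyl_subset_cylSet hmem (mem_cyl_pre x L)))
    have : x ∈ cyl (pre x L) ∩ Q := ⟨mem_cyl_pre x L, hxQ⟩
    rw [hemp] at this
    exact this
  have : μ ((cyl σ \ cylSet H') ∩ Q) = 0 := measure_mono_null hsub measure_empty
  rw [this] at hgt
  exact lt_irrefl _ hgt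

end Meas
section Card

/-- The finset of all boolean strings of length `m` has `2 ^ m` elements. -/
lemma exists_finset_len (m : ℕ) :
    ∃ s : Finset (List Bool), (∀ τ : List Bool, τ ∈ s ↔ τ.length = m) ∧ s.card = 2 ^ m := by
  classical
  induction m with
  | zero =>
    refine ⟨{[]}, ?_, by simp⟩
    intro τ
    simp [List.length_eq_zero_iff]
  | succ m ih =>
    obtain ⟨s, hs, hc⟩ := ih
    refine ⟨(s.image (List.cons true)) ∪ (s.image (List.cons false)), ?_, ?_⟩
    · intro τ
      simp only [Finset.mem_union, Finset.mem_image]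
      constructor
      · rintro (⟨a, ha, rfl⟩ | ⟨a, ha, rfl⟩) <;> simp [(hs _).1 ‹_›]
      · intro hτ
        cases τ with
        | nil => simp at hτ
        | cons b t =>
          have ht : t ∈ s := (hs t).2 (by simpa using hτ)
          cases b
          · exact Or.inr ⟨t, ht, rfl⟩
          · exact Or.inl ⟨t, ht, rfl⟩
    · rw [Finset.card_union_of_disjoint, Finset.card_image_of_injective _ (by
        intro a b hab; simpa using hab), Finset.card_image_of_injective _ (by
        intro a b hab; simpa using hab), hc]
      · ring
      · rw [Finset.disjoint_left]
        rintro τ hτ hτ'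
        simp only [Finset.mem_image] at hτ hτ'
        obtain ⟨a, _, rfl⟩ := hτ
        obtain ⟨b, _, hb⟩ := hτ'
        simp at hb

end Card
section Master

variable {I : Type} (z : ℕ → Bool) (y : I → ℕ → Bool)

/-- The tree of all prefixes of the main branch `z` and of the side branches `y i`. -/
def spiderTree : Set (List Bool) :=
  {τ | τ = pre z τ.length ∨ ∃ i, τ = pre (y i) τ.length}

lemma mem_spiderTree_pre_z (m : ℕ) : pre z m ∈ spiderTree z y := by
  left; rw [pre_length]

lemma mem_spiderTree_pre_y (i : I) (m : ℕ) : pre (y i) m ∈ spiderTree z y := by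
  right; exact ⟨i, by rw [pre_length]⟩

lemma spiderTree_isTree : IsTree (spiderTree z y) := by
  rintro σ (hσ | ⟨i, hσ⟩) τ hτ <;> [left; right]
  · exact prefix_pre (hσ ▸ hτ)
  · exact ⟨i, prefix_pre (hσ ▸ hτ)⟩

lemma spiderTree_pruned : Pruned (spiderTree z y) := by
  have key : ∀ (p : ℕ → Bool) (σ : List Bool), σ = pre p σ.length →
      σ <+: pre p (σ.length + 1) ∧ σ ≠ pre p (σ.length + 1) := by
    intro p σ hp
    constructor
    · nth_rewrite 1 [hp]; exact pre_prefix_pre p (Nat.le_succ _)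
    · intro hc
      have := congrArg List.length hc
      rw [pre_length] at this
      omega
  rintro σ (h | ⟨i, h⟩)
  · exact ⟨pre z (σ.length + 1), mem_spiderTree_pre_z z y _, key z σ h⟩
  · exact ⟨pre (y i) (σ.length + 1), mem_spiderTree_pre_y z y i _, key (y i) σ h⟩

lemma spiderTree_paths {x : ℕ → Bool} (hx : x ∈ paths (spiderTree z y)) (m : ℕ) :
    pre x m = pre z m ∨ ∃ i, pre x m = pre (y i) m := by
  have := hx m
  rcases this with h | ⟨i, h⟩
  · left; rwa [pre_length] at h
  · right; exact ⟨i, by rwa [pre_length] at h⟩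

variable {z y}

section WithDiv
variable {divpt : I → ℕ}
variable (hd1 : ∀ i, ∀ e < divpt i, y i e = z e)
variable (hd2 : ∀ i, y i (divpt i) ≠ z (divpt i))
variable (hinj : ∀ i j : I, divpt i = divpt j → y i = y j)
variable (hdense : ∀ m : ℕ, ∃ i, m ≤ divpt i)

include hd1 in
lemma agree_below {i : I} {m : ℕ} (hm : m ≤ divpt i) : pre (y i) m = pre z m :=
  pre_eq_iff.2 fun d hd => hd1 i d (lt_of_lt_of_le hd hm)

include hd1 hd2 hinj in
lemma spider_sp {p q : ℕ → Bool}
    (hp : p = z ∨ ∃ i, p = y i) (hq : q = z ∨ ∃ i, q = y i) (hpq : p ≠ q)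
    {m : ℕ} (hm : pre p m = pre q m) : pre p m = pre z m := by
  have main : ∀ i j : I, divpt i < divpt j → pre (y i) m = pre (y j) m →
      pre (y i) m = pre z m := by
    intro i j hij hm'
    have hmle : m ≤ divpt i := by
      by_contra hc
      push_neg at hc
      have h1 : y i (divpt i) = y j (divpt i) := pre_eq_iff.1 hm' _ hc
      have h2 : y j (divpt i) = z (divpt i) := hd1 j _ hij
      exact hd2 i (h1.trans h2)
    exact agree_below hd1 hmle
  rcases hp with rfl | ⟨i, rfl⟩
  · rfl
  · rcases hq with rfl | ⟨j, rfl⟩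
    · exact hm
    · have hij : divpt i ≠ divpt j := fun hc => hpq (hinj i j hc)
      rcases lt_or_gt_of_ne hij with hlt | hgt
      · exact main i j hlt hm
      · exact hm.trans (main j i hgt hm.symm)

include hd1 hd2 hinj hdense in
lemma spider_skeletal : SkeletalWithBranch (spiderTree z y) z := by
  constructor
  · intro m
    exact mem_spiderTree_pre_z z y m
  · intro σ hσ
    constructor
    · rintro ⟨τ₁, hτ₁, τ₂, hτ₂, hs1, hs2, hinc⟩
      have get : ∀ τ ∈ spiderTree z y, ∃ p : ℕ → Bool,
          (p = z ∨ ∃ i, p = y i) ∧ τ = pre p τ.length := by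
        rintro τ (h | ⟨i, h⟩)
        · exact ⟨z, Or.inl rfl, h⟩
        · exact ⟨y i, Or.inr ⟨i, rfl⟩, h⟩
      obtain ⟨p, hpP, hp⟩ := get τ₁ hτ₁
      obtain ⟨q, hqP, hq⟩ := get τ₂ hτ₂
      have hpq : p ≠ q := by
        rintro rfl
        rcases le_total τ₁.length τ₂.length with hle | hle
        · exact hinc.1 (by rw [hp, hq]; exact pre_prefix_pre p hle)
        · exact hinc.2 (by rw [hp, hq]; exact pre_prefix_pre p hle)
      have hσp : σ = pre p σ.length := prefix_pre (hp ▸ hs1)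
      have hσq : σ = pre q σ.length := prefix_pre (hq ▸ hs2)
      have hkey := spider_sp hd1 hd2 hinj hpP hqP hpq (m := σ.length)
        (by rw [← hσp, ← hσq])
      rw [prefOf_iff, ← hkey, ← hσp]
    · intro hσz
      obtain ⟨i, hi⟩ := hdense σ.length
      rw [prefOf_iff] at hσz
      refine ⟨pre z (divpt i + 1), mem_spiderTree_pre_z z y _,
        pre (y i) (divpt i + 1), mem_spiderTree_pre_y z y i _, ?_, ?_, ?_⟩
      · rw [hσz]; exact pre_prefix_pre z (by omega)
      · have hag : pre (y i) σ.length = pre z σ.length := agree_below hd1 hi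
        rw [hσz, ← hag]
        exact pre_prefix_pre (y i) (by omega)
      · refine incomp_of_ne (by simp) ?_
        intro hc
        exact hd2 i (pre_eq_iff.1 hc (divpt i) (Nat.lt_succ_self _)).symm

end WithDiv
end Master
section Part2
open MeasureTheory

lemma part2_bound {μ : Measure (ℕ → Bool)} {Q : Set (ℕ → Bool)}
    {H' : Set (List Bool)} {a b : ℕ} (hab : a ≤ b) :
    μ ((cylSet {τ : List Bool | τ.length = a ∧
        μ ((cyl τ \ cylSet H') ∩ Q) ≤ (2 : ℝ≥0∞)⁻¹ ^ b} \ cylSet H') ∩ Q) ≤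
      (2 : ℝ≥0∞)⁻¹ ^ (b - a) := by
  classical
  obtain ⟨E, hE, hEcard⟩ := exists_finset_len a
  set Hs : Set (List Bool) := {τ : List Bool | τ.length = a ∧
      μ ((cyl τ \ cylSet H') ∩ Q) ≤ (2 : ℝ≥0∞)⁻¹ ^ b} with hHs
  set E' : Finset (List Bool) := E.filter (· ∈ Hs) with hE'
  have hsub : (cylSet Hs \ cylSet H') ∩ Q ⊆ ⋃ τ ∈ E', (cyl τ \ cylSet H') ∩ Q := by
    rintro x ⟨⟨hx1, hx2⟩, hxQ⟩
    obtain ⟨τ, hτHs, hxτ⟩ := by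
      simpa only [cylSet, Set.mem_iUnion, exists_prop] using hx1
    have hτE' : τ ∈ E' := by
      rw [hE', Finset.mem_filter]
      exact ⟨(hE τ).2 hτHs.1, hτHs⟩
    exact Set.mem_biUnion hτE' ⟨⟨hxτ, hx2⟩, hxQ⟩
  calc μ ((cylSet Hs \ cylSet H') ∩ Q) ≤ μ (⋃ τ ∈ E', (cyl τ \ cylSet H') ∩ Q) :=
        measure_mono hsub
    _ ≤ ∑ τ ∈ E', μ ((cyl τ \ cylSet H') ∩ Q) := measure_biUnion_finset_le E' _
    _ ≤ ∑ _τ ∈ E', (2 : ℝ≥0∞)⁻¹ ^ b := by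
        refine Finset.sum_le_sum fun τ hτ => ?_
        rw [hE', Finset.mem_filter] at hτ
        exact hτ.2.2
    _ = (E'.card : ℝ≥0∞) * (2 : ℝ≥0∞)⁻¹ ^ b := by
        rw [Finset.sum_const, nsmul_eq_mul]
    _ ≤ ((2 : ℝ≥0∞) ^ a) * (2 : ℝ≥0∞)⁻¹ ^ b := by
        refine mul_le_mul_left ?_ _
        have h1 : E'.card ≤ 2 ^ a := by
          rw [← hEcard]
          exact Finset.card_filter_le E _
        calc (E'.card : ℝ≥0∞) ≤ ((2 ^ a : ℕ) : ℝ≥0∞) := Nat.cast_le.2 h1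
          _ = (2 : ℝ≥0∞) ^ a := by push_cast; ring
    _ = (2 : ℝ≥0∞)⁻¹ ^ (b - a) := by
        have hb : b = a + (b - a) := by omega
        rw [hb, pow_add, ← mul_assoc, ← mul_pow, ENNReal.mul_inv_cancel (by norm_num)
          (by norm_num), one_pow, one_mul]
        congr 1
        omega

end Part2
section Helpers

lemma pre_getD {x : ℕ → Bool} {m d : ℕ} (hd : d < m) : (pre x m).getD d false = x d := by
  rw [List.getD_eq_getElem _ _ (by simpa using hd)]
  simp [pre]

lemma IsPrefix.getD_eq' {u v : List Bool} (h : u <+: v) {d : ℕ} (hd : d < u.length) :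
    u.getD d false = v.getD d false := by
  obtain ⟨w, rfl⟩ := h
  rw [List.getD_eq_getElem _ _ hd, List.getD_eq_getElem _ _
    (lt_of_lt_of_le hd (by simp)), List.getElem_append_left]

lemma eq_pre_of_getD {u : List Bool} {x : ℕ → Bool}
    (h : ∀ d < u.length, u.getD d false = x d) : u = pre x u.length := by
  apply List.ext_getElem (by simp)
  intro i h1 h2
  have := h i h1
  rw [List.getD_eq_getElem _ _ h1] at this
  rw [this]
  simp [pre]

lemma pre_eq_mono {x w : ℕ → Bool} {M m : ℕ} (h : pre x M = pre w M) (hm : m ≤ M) :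
    pre x m = pre w m :=
  pre_eq_iff.2 fun d hd => pre_eq_iff.1 h d (lt_of_lt_of_le hd hm)

lemma bool_eq_of_ne {a b c : Bool} (h1 : a ≠ c) (h2 : b ≠ c) : a = b := by
  cases a <;> cases b <;> cases c <;> simp_all

end Helpers
/-- Let `Q` be nonempty closed with the `l`-branching property, `F` a
finite tree of height `h ≤ l n`, and `𝒜 ⊆ 𝒯(Q, F)` invariant under `l n`-prefixes.
If `H' ⊆ 2^{l (n+1)}` hits `𝒜`, then
`H = {τ ∈ 2^{l n} : μ(([τ] \ [H']) ∩ Q) ≤ 2^{-l (n+1)}}` also hits `𝒜` and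
`μ(([H] \ [H']) ∩ Q) ≤ 2^{l n - l (n+1)}`. -/
theorem stmt_7 (μ : MeasureTheory.Measure (ℕ → Bool)) (hμ : IsFairCoin μ)
    (l : ℕ → ℕ) (hl : StrictMono l)
    (Q : Set (ℕ → Bool)) (hQne : Q.Nonempty) (hQcl : IsClosed Q)
    (hQbr : LBranchingProp l Q)
    (F : Finset (List Bool)) (h : ℕ) (hF : FinTree F h)
    (n : ℕ) (hn : h ≤ l n)
    (𝒜 : Set (Set (List Bool))) (h𝒜 : ∀ T ∈ 𝒜, TQF l Q F h T)
    (hinv : ∀ T T' : Set (List Bool), TQF l Q F h T → TQF l Q F h T' →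
      (∀ σ : List Bool, σ.length ≤ l n → (σ ∈ T ↔ σ ∈ T')) → (T ∈ 𝒜 ↔ T' ∈ 𝒜))
    (H' : Set (List Bool)) (hH' : ∀ σ ∈ H', σ.length = l (n + 1))
    (hhits : HitsT H' 𝒜) :
    HitsT {τ : List Bool | τ.length = l n ∧
        μ ((cyl τ \ cylSet H') ∩ Q) ≤ (2 : ℝ≥0∞)⁻¹ ^ l (n + 1)} 𝒜 ∧
      μ ((cylSet {τ : List Bool | τ.length = l n ∧
          μ ((cyl τ \ cylSet H') ∩ Q) ≤ (2 : ℝ≥0∞)⁻¹ ^ l (n + 1)} \ cylSet H') ∩ Q) ≤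
        (2 : ℝ≥0∞)⁻¹ ^ (l (n + 1) - l n) := by
  classical
  have hln1 : l n < l (n + 1) := hl (Nat.lt_succ_self n)
  constructor
  swap
  · exact part2_bound hln1.le
  intro T hT𝒜
  by_contra hno
  rw [Set.not_nonempty_iff_eq_empty] at hno
  have hnoH : ∀ τ ∈ T, τ.length = l n →
      (2 : ℝ≥0∞)⁻¹ ^ l (n + 1) < μ ((cyl τ \ cylSet H') ∩ Q) := by
    intro τ hτ hlen
    by_contra hc
    push_neg at hc
    have : τ ∈ T ∩ {τ : List Bool | τ.length = l n ∧
        μ ((cyl τ \ cylSet H') ∩ Q) ≤ (2 : ℝ≥0∞)⁻¹ ^ l (n + 1)} := ⟨hτ, hlen, hc⟩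
    rw [hno] at this
    exact this
  obtain ⟨hTtree, hTpr, ⟨zT, hskel, hlbrT⟩, hText, hTpaths⟩ := h𝒜 T hT𝒜
  set σ₀ : List Bool := pre zT (l n) with hσ₀def
  have hσ₀T : σ₀ ∈ T := hskel.1 (l n)
  have hσ₀len : σ₀.length = l n := pre_length zT (l n)
  obtain ⟨ρ₁, ρ₂, hρne, hρ₁len, hρ₂len, hρ₁ext, hρ₂ext, hρ₁H, hρ₂H, hρ₁Q, hρ₂Q⟩ :=
    two_ext hμ (by rw [hσ₀len]; exact hln1.le) (hnoH σ₀ hσ₀T hσ₀len)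
  obtain ⟨c, s, hc0, hcprop, hcstep⟩ := exists_chain hQbr (n + 1) ρ₁ hρ₁len hρ₁Q
  -- the new main branch
  set z' : ℕ → Bool := fun d => (c (d + 1)).getD d false with hz'def
  have hmono : ∀ k j, k ≤ j → c k <+: c j := by
    intro k j hkj
    induction j, hkj using Nat.le_induction with
    | base => exact List.prefix_refl _
    | succ j hkj ih => exact ih.trans (hcstep j).1
  have hck : ∀ k, c k = pre z' (l (n + 1 + k)) := by
    intro k
    have hlen := (hcprop k).1
    rw [← hlen]
    apply eq_pre_of_getD
    intro d hd
    simp only [hz'def]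
    rcases le_total k (d + 1) with hle | hle
    · exact IsPrefix.getD_eq' (hmono k (d + 1) hle) hd
    · refine (IsPrefix.getD_eq' (hmono (d + 1) k hle) ?_).symm
      rw [(hcprop (d + 1)).1]
      have := hl.le_apply (x := n + 1 + (d + 1))
      omega
  have hρ₁z : ρ₁ = pre z' (l (n + 1)) := by rw [← hc0]; exact hck 0
  have hck' : ∀ k, c (k + 1) = pre z' (l (n + 1 + k + 1)) := fun k => hck (k + 1)
  have hσ₀z : σ₀ = pre z' (l n) := by
    have h1 : σ₀ <+: pre z' (l (n + 1)) := by
      rw [← hρ₁z]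
      exact hρ₁ext
    have := prefix_pre h1
    rwa [hσ₀len] at this
  have hzz : ∀ e < l n, z' e = zT e := by
    intro e he
    exact (pre_eq_iff.1 (hσ₀z.symm.trans (hσ₀def ▸ rfl)) e he)
  -- side point above ρ₂
  obtain ⟨yB, hyBc, hyBQ⟩ := hρ₂Q
  have hyBρ : pre yB (l (n + 1)) = ρ₂ := by
    have := hyBc
    rw [mem_cyl_iff, hρ₂len] at this
    exact this
  -- side points above the chain
  have hyCex : ∀ k : ℕ, ∃ w : ℕ → Bool, w ∈ cyl (s (k + 1)) ∧ w ∈ Q :=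
    fun k => by obtain ⟨w, hw1, hw2⟩ := (hcstep k).2.2.2.2; exact ⟨w, hw1, hw2⟩
  choose yC hyCc hyCQ using hyCex
  have hyCs : ∀ k, pre (yC k) (l (n + 1 + k + 1)) = s (k + 1) := by
    intro k
    have h1 := hyCc k
    rw [mem_cyl_iff, (hcstep k).2.2.1] at h1
    exact h1
  have hyCz : ∀ k, ∀ m ≤ l (n + 1 + k), pre (yC k) m = pre z' m := by
    intro k m hm
    refine pre_eq_mono ?_ hm
    have h1 : c k <+: pre (yC k) (l (n + 1 + k + 1)) := by
      rw [hyCs k]; exact (hcstep k).2.1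
    have h2 := prefix_pre h1
    rw [(hcprop k).1] at h2
    rw [← h2, hck k]
  -- side points below level l n
  have hAex : ∀ σ : List Bool, σ ∈ T → σ.length = l n →
      ∃ p : (ℕ → Bool) × List Bool, p.2.length = l (n + 1) ∧ σ <+: p.2 ∧ p.2 ∉ H' ∧
        p.1 ∈ cyl p.2 ∧ p.1 ∈ Q := by
    intro σ h1 h2
    have hpos : 0 < μ ((cyl σ \ cylSet H') ∩ Q) := by
      refine lt_trans ?_ (hnoH σ h1 h2)
      exact ENNReal.pow_pos (ENNReal.inv_pos.2 (by norm_num)) _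
    obtain ⟨ρ, hρl, hρe, hρH, hρQ⟩ := one_ext (L := l (n + 1)) (by rw [h2]; exact hln1.le) hpos
    obtain ⟨w, hwc, hwQ⟩ := hρQ
    exact ⟨(w, ρ), hρl, hρe, hρH, hwc, hwQ⟩
  choose pA hA1 hA2 hA3 hA4 hA5 using hAex
  have hApre : ∀ (σ : List Bool) (h1 : σ ∈ T) (h2 : σ.length = l n),
      pre (pA σ h1 h2).1 (l (n + 1)) = (pA σ h1 h2).2 := by
    intro σ h1 h2
    have := hA4 σ h1 h2
    rw [mem_cyl_iff, hA1 σ h1 h2] at this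
    exact this
  have hAσ : ∀ (σ : List Bool) (h1 : σ ∈ T) (h2 : σ.length = l n),
      pre (pA σ h1 h2).1 (l n) = σ := by
    intro σ h1 h2
    have hpre : σ <+: pre (pA σ h1 h2).1 (l (n + 1)) := by
      rw [hApre σ h1 h2]; exact hA2 σ h1 h2
    have := prefix_pre hpre
    rw [h2] at this
    exact this.symm
  -- the index type for side branches
  set I : Type := {σ : List Bool // σ ∈ T ∧ σ.length = l n ∧ σ ≠ σ₀} ⊕ ℕ with hIdef
  set y : I → ℕ → Bool := Sum.elim
      (fun j => (pA j.1 j.2.1 j.2.2.1).1)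
      (fun k => match k with
        | 0 => yB
        | k + 1 => yC k) with hydef
  -- basic prefix facts for the side branches
  have hyA_ln : ∀ j, pre (y (Sum.inl j)) (l n) = j.1 := by
    intro j
    exact hAσ j.1 j.2.1 j.2.2.1
  have hyB_def : y (Sum.inr 0) = yB := rfl
  have hyC_def : ∀ k, y (Sum.inr (k + 1)) = yC k := fun k => rfl
  -- divergence: each side branch differs from z'
  have hneq : ∀ i : I, ∃ d, y i d ≠ z' d := by
    rintro (j | k)
    · by_contra hcon
      push_neg at hcon
      have : pre (y (Sum.inl j)) (l n) = pre z' (l n) := pre_eq_iff.2 fun d _ => hcon d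
      rw [hyA_ln j, ← hσ₀z] at this
      exact j.2.2.2 this
    · match k with
      | 0 =>
        by_contra hcon
        push_neg at hcon
        have : pre yB (l (n + 1)) = pre z' (l (n + 1)) := pre_eq_iff.2 fun d _ => hcon d
        rw [hyBρ, ← hρ₁z] at this
        exact hρne this.symm
      | k + 1 =>
        by_contra hcon
        push_neg at hcon
        have h1 : pre (yC k) (l (n + 1 + k + 1)) = pre z' (l (n + 1 + k + 1)) :=
          pre_eq_iff.2 fun d _ => hcon d
        rw [hyCs k, ← hck' k] at h1
        exact (hcstep k).2.2.2.1 h1.symm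
  set divpt : I → ℕ := fun i => Nat.find (hneq i) with hdivdef
  have hd1 : ∀ i, ∀ e < divpt i, y i e = z' e := by
    intro i e he
    have := Nat.find_min (hneq i) he
    simpa using this
  have hd2 : ∀ i, y i (divpt i) ≠ z' (divpt i) := fun i => Nat.find_spec (hneq i)
  -- divergence point bounds
  have hdivA : ∀ j, divpt (Sum.inl j) < l n := by
    intro j
    have hne' : pre (y (Sum.inl j)) (l n) ≠ pre z' (l n) := by
      rw [hyA_ln j, ← hσ₀z]
      exact j.2.2.2
    obtain ⟨d, hd, hdne⟩ := pre_ne_of_ne hne'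
    exact lt_of_le_of_lt (Nat.find_le hdne) hd
  have hdivB : ∀ k, l (n + k) ≤ divpt (Sum.inr k) ∧ divpt (Sum.inr k) < l (n + k + 1) := by
    intro k
    constructor
    · rw [hdivdef]
      rw [Nat.le_find_iff]
      intro m hm
      simp only [not_not]
      match k with
      | 0 =>
        have h1 : pre yB (l n) = σ₀ := by
          have hp : σ₀ <+: pre yB (l (n + 1)) := by rw [hyBρ]; exact hρ₂ext
          have := prefix_pre hp
          rw [hσ₀len] at this
          exact this.symm
        have h2 : pre (y (Sum.inr 0)) (l n) = pre z' (l n) := by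
          rw [hyB_def, h1, hσ₀z]
        exact pre_eq_iff.1 h2 m (by simpa using hm)
      | k + 1 =>
        have h2 : pre (y (Sum.inr (k + 1))) (l (n + 1 + k)) = pre z' (l (n + 1 + k)) := by
          rw [hyC_def k]
          exact hyCz k _ le_rfl
        have hmlt : m < l (n + 1 + k) := by
          have : n + (k + 1) = n + 1 + k := by omega
          rw [this] at hm
          exact hm
        exact pre_eq_iff.1 h2 m hmlt
    · match k with
      | 0 =>
        have hne' : pre (y (Sum.inr 0)) (l (n + 1)) ≠ pre z' (l (n + 1)) := by
          rw [hyB_def, hyBρ, ← hρ₁z]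
          exact fun hcc => hρne hcc.symm
        obtain ⟨d, hd, hdne⟩ := pre_ne_of_ne hne'
        have : n + 0 + 1 = n + 1 := by omega
        rw [this]
        exact lt_of_le_of_lt (Nat.find_le hdne) hd
      | k + 1 =>
        have hne' : pre (y (Sum.inr (k + 1))) (l (n + 1 + k + 1)) ≠
            pre z' (l (n + 1 + k + 1)) := by
          rw [hyC_def k, hyCs k, ← hck' k]
          exact fun hcc => (hcstep k).2.2.2.1 hcc.symm
        obtain ⟨d, hd, hdne⟩ := pre_ne_of_ne hne'
        have : n + (k + 1) + 1 = n + 1 + k + 1 := by omega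
        rw [this]
        exact lt_of_le_of_lt (Nat.find_le hdne) hd
  -- equal divergence points force equal side branches
  have hAA : ∀ (a b : {σ : List Bool // σ ∈ T ∧ σ.length = l n ∧ σ ≠ σ₀}),
      divpt (Sum.inl a) = divpt (Sum.inl b) → a.1 = b.1 := by
    intro a b heqd
    by_contra hab
    set d := divpt (Sum.inl a) with hd
    have hdln : d < l n := hdivA a
    set p := y (Sum.inl a) with hpdef
    set q := y (Sum.inl b) with hqdef
    have hpreq : pre p (l n) ≠ pre q (l n) := by
      rw [hpdef, hqdef, hyA_ln a, hyA_ln b]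
      exact hab
    have hpq : ∃ e, p e ≠ q e := by
      obtain ⟨e, _, hne⟩ := pre_ne_of_ne hpreq
      exact ⟨e, hne⟩
    set e := Nat.find hpq with hedef
    have hespec : p e ≠ q e := Nat.find_spec hpq
    have hemin : ∀ e' < e, p e' = q e' := by
      intro e' he'
      have := Nat.find_min hpq he'
      simpa using this
    have heln : e < l n := by
      obtain ⟨e', he', hne'⟩ := pre_ne_of_ne hpreq
      exact lt_of_le_of_lt (Nat.find_le hne') he'
    have hed : d < e := by
      rcases lt_trichotomy e d with hlt | heq2 | hgt
      · exact absurd ((hd1 (Sum.inl a) e hlt).trans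
          (hd1 (Sum.inl b) e (heqd ▸ hlt)).symm) hespec
      · refine absurd (bool_eq_of_ne (c := z' d) ?_ ?_) (heq2 ▸ hespec)
        · exact hd2 (Sum.inl a)
        · have := hd2 (Sum.inl b)
          rw [← heqd] at this
          exact this
      · exact hgt
    have hτeq : pre p e = pre q e := pre_eq_iff.2 fun d' hd' => hemin d' hd'
    have hτa : pre p e <+: a.1 := by
      rw [← hyA_ln a, ← hpdef]
      exact pre_prefix_pre p heln.le
    have hτb : pre p e <+: b.1 := by
      rw [hτeq, ← hyA_ln b, ← hqdef]
      exact pre_prefix_pre q heln.le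
    have hτT : pre p e ∈ T := hTtree a.1 a.2.1 _ hτa
    have hbr : Branches T (pre p e) :=
      ⟨a.1, a.2.1, b.1, b.2.1, hτa, hτb,
        incomp_of_ne (a.2.2.1.trans b.2.2.1.symm) hab⟩
    have hprefz : PrefOf (pre p e) zT := (hskel.2 _ hτT).1 hbr
    rw [prefOf_iff, pre_length] at hprefz
    have h1 : p d = zT d := (pre_eq_iff.1 hprefz.symm d hed).symm
    have h2 : z' d = zT d := hzz d hdln
    exact hd2 (Sum.inl a) (h1.trans h2.symm)
  have hlnk : ∀ k : ℕ, l n ≤ l (n + k) := fun k => hl.monotone (by omega)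
  have hinjd : ∀ i j : I, divpt i = divpt j → y i = y j := by
    rintro (a | k) (b | k') heq
    · have hab : a = b := Subtype.ext (hAA a b heq)
      rw [hab]
    · exfalso
      have h1 := hdivA a
      have h2 := (hdivB k').1
      have h3 := hlnk k'
      omega
    · exfalso
      have h1 := hdivA b
      have h2 := (hdivB k).1
      have h3 := hlnk k
      omega
    · have hkk : k = k' := by
        by_contra hkk
        rcases lt_or_gt_of_ne hkk with hlt | hgt
        · have h1 := (hdivB k).2
          have h2 := (hdivB k').1
          have h3 : l (n + k + 1) ≤ l (n + k') := hl.monotone (by omega)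
          omega
        · have h1 := (hdivB k').2
          have h2 := (hdivB k).1
          have h3 : l (n + k' + 1) ≤ l (n + k) := hl.monotone (by omega)
          omega
      rw [hkk]
  have hdense : ∀ m : ℕ, ∃ i : I, m ≤ divpt i := by
    intro m
    refine ⟨Sum.inr m, le_trans ?_ (hdivB m).1⟩
    exact le_trans (by omega) (hl.le_apply (x := n + m))
  -- the new tree
  have hT'skel : SkeletalWithBranch (spiderTree z' y) z' :=
    spider_skeletal hd1 hd2 hinjd hdense
  -- prefixes at level l n of all generators lie in T
  have hgenT : ∀ p : ℕ → Bool, (p = z' ∨ ∃ i, p = y i) → pre p (l n) ∈ T := by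
    rintro p (rfl | ⟨i, rfl⟩)
    · rw [← hσ₀z]
      exact hσ₀T
    · rcases i with j | k
      · rw [hyA_ln j]
        exact j.2.1
      · match k with
        | 0 =>
          have h1 : pre (y (Sum.inr 0)) (l n) = σ₀ := by
            rw [hyB_def]
            have hp : σ₀ <+: pre yB (l (n + 1)) := by rw [hyBρ]; exact hρ₂ext
            have h2 := prefix_pre hp
            rw [hσ₀len] at h2
            exact h2.symm
          rw [h1]
          exact hσ₀T
        | k + 1 =>
          have h1 : pre (y (Sum.inr (k + 1))) (l n) = pre z' (l n) := by
            rw [hyC_def k]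
            exact hyCz k _ (hl.monotone (by omega))
          rw [h1, ← hσ₀z]
          exact hσ₀T
  -- agreement of the two trees up to level l n
  have hagree : ∀ τ : List Bool, τ.length ≤ l n → (τ ∈ spiderTree z' y ↔ τ ∈ T) := by
    intro τ hτl
    constructor
    · intro hmem
      have hex : ∃ p, (p = z' ∨ ∃ i, p = y i) ∧ τ = pre p τ.length := by
        rcases hmem with hp | ⟨i, hp⟩
        exacts [⟨z', Or.inl rfl, hp⟩, ⟨y i, Or.inr ⟨i, rfl⟩, hp⟩]
      obtain ⟨p, hpP, hp⟩ := hex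
      have h1 : τ <+: pre p (l n) := by
        rw [hp]
        exact pre_prefix_pre p hτl
      exact hTtree _ (hgenT p hpP) τ h1
    · intro hmem
      obtain ⟨σ, hσT', hσlen, hτσ⟩ := ext_to_length hTtree hTpr hmem hτl
      by_cases hσeq : σ = σ₀
      · left
        have hh : τ <+: pre z' (l n) := by
          rw [← hσ₀z, ← hσeq]
          exact hτσ
        exact prefix_pre hh
      · right
        refine ⟨Sum.inl ⟨σ, hσT', hσlen, hσeq⟩, ?_⟩
        have hh : τ <+: pre (y (Sum.inl ⟨σ, hσT', hσlen, hσeq⟩)) (l n) := by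
          rw [hyA_ln]
          exact hτσ
        exact prefix_pre hh
  -- the new tree is l-branching skeletal
  have hlbr' : LBranchingSkel l (spiderTree z' y) z' := by
    intro i
    rcases lt_or_ge i n with hin | hin
    · obtain ⟨τ₁, hτ₁T, τ₂, hτ₂T, hp1, hp2, hl1, hl2, hinc⟩ := hlbrT i
      have hzzi : pre z' (l i) = pre zT (l i) :=
        pre_eq_iff.2 fun e he => hzz e (lt_of_lt_of_le he (hl.monotone hin.le))
      have hlin : l (i + 1) ≤ l n := hl.monotone (by omega)
      refine ⟨τ₁, (hagree τ₁ (le_trans hl1 hlin)).2 hτ₁T, τ₂,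
        (hagree τ₂ (le_trans hl2 hlin)).2 hτ₂T, ?_, ?_, hl1, hl2, hinc⟩
      · rw [hzzi]; exact hp1
      · rw [hzzi]; exact hp2
    · set k := i - n with hk
      have hnk : n + k = i := by omega
      have hb := hdivB k
      rw [hnk] at hb
      refine ⟨pre z' (l (i + 1)), mem_spiderTree_pre_z z' y _,
        pre (y (Sum.inr k)) (l (i + 1)), mem_spiderTree_pre_y z' y _ _,
        pre_prefix_pre z' (hl.monotone (by omega)), ?_, by simp, by simp, ?_⟩
      · have heqq : pre (y (Sum.inr k)) (l i) = pre z' (l i) := agree_below hd1 hb.1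
        calc pre z' (l i) = pre (y (Sum.inr k)) (l i) := heqq.symm
          _ <+: pre (y (Sum.inr k)) (l (i + 1)) := pre_prefix_pre _ (hl.monotone (by omega))
      · refine incomp_of_ne (by simp) ?_
        intro hcc
        exact hd2 (Sum.inr k) (pre_eq_iff.1 hcc (divpt (Sum.inr k)) hb.2).symm
  -- paths of the new tree lie in Q
  have hpathsQ : paths (spiderTree z' y) ⊆ Q := by
    intro x hx
    refine mem_of_closed_approx hQcl fun m => ?_
    rcases spiderTree_paths z' y hx m with hzm | ⟨i, him⟩
    · refine ⟨yC m, hyCQ m, ?_⟩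
      rw [hzm]
      exact hyCz m m (le_trans (by omega) (hl.le_apply (x := n + 1 + m)))
    · refine ⟨y i, ?_, him.symm⟩
      rcases i with j | k
      · exact hA5 j.1 j.2.1 j.2.2.1
      · match k with
        | 0 => exact hyBQ
        | k + 1 => exact hyCQ k
  -- the new tree is in the class
  have hTQF' : TQF l Q F h (spiderTree z' y) :=
    ⟨spiderTree_isTree z' y, spiderTree_pruned z' y, ⟨z', hT'skel, hlbr'⟩,
      fun σ hσ => (hagree σ (le_trans hσ hn)).trans (hText σ hσ), hpathsQ⟩
  have hT'𝒜 : spiderTree z' y ∈ 𝒜 :=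
    (hinv T (spiderTree z' y) (h𝒜 T hT𝒜) hTQF' fun σ hσ => (hagree σ hσ).symm).1 hT𝒜
  obtain ⟨τ, hτT', hτH'⟩ := hhits _ hT'𝒜
  have hτlen : τ.length = l (n + 1) := hH' τ hτH'
  have hgen2 : ∀ p : ℕ → Bool, (p = z' ∨ ∃ i, p = y i) → pre p (l (n + 1)) ∉ H' := by
    rintro p (rfl | ⟨i, rfl⟩)
    · rw [← hρ₁z]
      exact hρ₁H
    · rcases i with j | k
      · show pre (pA j.1 j.2.1 j.2.2.1).1 (l (n + 1)) ∉ H'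
        rw [hApre j.1 j.2.1 j.2.2.1]
        exact hA3 j.1 j.2.1 j.2.2.1
      · match k with
        | 0 =>
          rw [hyB_def, hyBρ]
          exact hρ₂H
        | k + 1 =>
          rw [hyC_def k, hyCz k (l (n + 1)) (hl.monotone (by omega)), ← hρ₁z]
          exact hρ₁H
  rcases hτT' with hp | ⟨i, hp⟩
  · refine hgen2 z' (Or.inl rfl) ?_
    rw [← hτlen, ← hp]
    exact hτH'
  · refine hgen2 (y i) (Or.inr ⟨i, rfl⟩) ?_
    rw [← hτlen, ← hp]
    exact hτH'
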